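/- arXiv:1505.03006 — 3 statements merged into one kernel-verified Lean document; each statement's English description precedes it below -/
import Mathlib

section
/- Let f : ℝ₊^N → ℝ₊₊ be an upper semicontinuous concave function, let S := ⋃_{x ∈ ℝ₊^N} ∂f(x) be the set of all supergradients of f, and for k ∈ {1,…,N} define g_k* := inf{ g_k : g = (g₁,…,g_N) ∈ S }. Then for every k ∈ {1,…,N}, g_k* is a nonnegative real number and g_k* = lim_{h → 0⁺} h · f(h⁻¹ · e_k). -/
/-!
Because `f > 0` on the orthant, every supergradient `g` at a point `x ≥ 0` is nonnegative, so
testing it at `h⁻¹ • e_k` gives `h * f (h⁻¹ • e_k) ≤ h * f x + g k`; letting `h → 0⁺` and `g k`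
approach `g_k*` bounds the limit superior by `g_k*`. Conversely, by Hahn–Banach supergradients
exist at interior points, and upper semicontinuity provides interior points `x ≥ h⁻¹ • e_k` with
`f x` barely above `f (h⁻¹ • e_k)`; testing a supergradient at `x` against `0` gives
`h⁻¹ * g k ≤ f x`, so `g_k* ≤ h * f (h⁻¹ • e_k)` for every `h > 0`.
-/

open Matrix Filter Topology

noncomputable section

/-- `g` is a supergradient of `f` at `x`: the supergradient inequality holds for all
points `y` in the nonnegative orthant. -/
def IsSupergrad {N : ℕ} (f : (Fin N → ℝ) → ℝ) (x g : Fin N → ℝ) : Prop :=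
  ∀ y : Fin N → ℝ, 0 ≤ y → f y ≤ f x + ∑ i, g i * (y i - x i)

end

/-- Separate `(x, f x)` from the interior of the strict hypograph; the interior point `(x, m - 1)`
forces the vertical coefficient of the separating functional to be positive. -/
theorem ConcaveOn.exists_le_add_of_mem_interior {E : Type*} [AddCommGroup E] [TopologicalSpace E]
    [IsTopologicalAddGroup E] [Module ℝ E] [ContinuousSMul ℝ E] {s : Set E} {f : E → ℝ}
    (hf : ConcaveOn ℝ s f) {x : E} (hx : x ∈ interior s) {m : ℝ} (hm : ∀ᶠ y in 𝓝 x, m ≤ f y) :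
    ∃ φ : StrongDual ℝ E, ∀ y ∈ s, f y ≤ f x + φ (y - x) := by
  set H : Set (E × ℝ) := {p | p.1 ∈ s ∧ p.2 < f p.1}
  have hH : Convex ℝ H := hf.convex_strict_hypograph
  have hxH : (x, m - 1) ∈ interior H := by
    refine mem_interior_iff_mem_nhds.2 (Filter.mem_of_superset
      (prod_mem_nhds (hm.and (mem_interior_iff_mem_nhds.1 hx)) (Iio_mem_nhds (sub_one_lt m))) ?_)
    rintro ⟨y, t⟩ ⟨⟨hmy, hy⟩, ht⟩
    exact ⟨hy, ht.trans_le hmy⟩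
  have hxfx : (x, f x) ∉ interior H := fun h => (interior_subset h).2.false
  obtain ⟨ℓ, hℓ⟩ := geometric_hahn_banach_open_point hH.interior isOpen_interior hxfx
  have hle : ∀ p ∈ H, ℓ p ≤ ℓ (x, f x) := by
    refine fun p hp => closure_minimal (fun a ha => (hℓ a ha).le)
      (isClosed_le ℓ.continuous continuous_const) ?_
    rw [hH.closure_interior_eq_closure_of_nonempty_interior ⟨_, hxH⟩]
    exact subset_closure hp
  set φ₀ := ℓ.comp (ContinuousLinearMap.inl ℝ E ℝ)
  set c := ℓ (0, 1)
  have hsplit : ∀ y t, ℓ (y, t) = φ₀ y + t * c := fun y t => by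
    rw [show ((y, t) : E × ℝ) = (y, 0) + t • (0, 1) by simp, map_add, map_smul, smul_eq_mul]
    rfl
  have hc : 0 < c := by
    have h := hℓ _ hxH
    rw [hsplit, hsplit] at h
    have : m ≤ f x := hm.self_of_nhds
    exact pos_of_mul_pos_right (show 0 < (f x - (m - 1)) * c by linarith) (by linarith)
  refine ⟨-c⁻¹ • φ₀, fun y hy => le_of_forall_lt_imp_le_of_dense fun t ht => ?_⟩
  have h := hle (y, t) ⟨hy, ht⟩
  rw [hsplit, hsplit] at h
  have : (-c⁻¹ • φ₀) (y - x) = (φ₀ x - φ₀ y) / c := by simp; ring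
  rw [this, ← sub_le_iff_le_add', le_div_iff₀ hc]
  linarith

theorem StrongDual.apply_eq_sum_apply_single_mul {N : ℕ} (φ : StrongDual ℝ (Fin N → ℝ))
    (v : Fin N → ℝ) : φ v = ∑ i, φ (Pi.single i 1) * v i := by
  conv_lhs => rw [← Finset.univ_sum_single v]
  refine (map_sum φ _ _).trans (Finset.sum_congr rfl fun i _ => ?_)
  rw [mul_comm, ← smul_eq_mul, ← map_smul, ← Pi.single_smul', smul_eq_mul, mul_one]

section Orthant

variable {N : ℕ} {f : (Fin N → ℝ) → ℝ} {x g : Fin N → ℝ}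

theorem exists_isSupergrad_of_pos (hconc : ConcaveOn ℝ {x | 0 ≤ x} f)
    (hf : ∀ y, 0 ≤ y → 0 ≤ f y) (hx : ∀ i, 0 < x i) : ∃ g, IsSupergrad f x g := by
  have hnhds : ∀ᶠ y in 𝓝 x, 0 ≤ y := by
    filter_upwards [eventually_all.2 fun i =>
      (continuous_apply i).continuousAt.eventually (lt_mem_nhds (hx i))] with y hy
    exact fun i => (hy i).le
  obtain ⟨φ, hφ⟩ :=
    hconc.exists_le_add_of_mem_interior (mem_interior_iff_mem_nhds.2 hnhds) (hnhds.mono hf)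
  refine ⟨fun i => φ (Pi.single i 1), fun y hy => ?_⟩
  have h := hφ y hy
  rw [φ.apply_eq_sum_apply_single_mul] at h
  simpa only [Pi.sub_apply] using h

namespace IsSupergrad

theorem nonneg (hf : ∀ y, 0 ≤ y → 0 ≤ f y) (hx : 0 ≤ x) (hg : IsSupergrad f x g) (i : Fin N) :
    0 ≤ g i := by
  by_contra! hgi
  set t := (f x + 1) / -g i
  have hy : 0 ≤ x + Pi.single i t :=
    add_nonneg hx (Pi.single_nonneg.2 (div_nonneg (by linarith [hf x hx]) (by linarith)))
  have h := hg _ hy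
  have ht : g i * t = -(f x + 1) := by
    simp only [t]
    field_simp [hgi.ne]
  simp only [Pi.add_apply, add_sub_cancel_left, Pi.single_apply, mul_ite, mul_zero,
    Finset.sum_ite_eq', Finset.mem_univ, if_true, ht] at h
  linarith [hf _ hy]

theorem sum_mul_le (hf0 : 0 ≤ f 0) (hg : IsSupergrad f x g) : ∑ i, g i * x i ≤ f x := by
  have h := hg 0 le_rfl
  simp only [Pi.zero_apply, zero_sub, mul_neg, Finset.sum_neg_distrib] at h
  linarith

theorem le_add_sum_mul (hf : ∀ y, 0 ≤ y → 0 ≤ f y) (hx : 0 ≤ x) (hg : IsSupergrad f x g)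
    {y : Fin N → ℝ} (hy : 0 ≤ y) : f y ≤ f x + ∑ i, g i * y i :=
  calc f y ≤ f x + ∑ i, g i * (y i - x i) := hg y hy
    _ ≤ f x + ∑ i, g i * y i := by
      gcongr with i
      · exact hg.nonneg hf hx i
      · exact sub_le_self _ (hx i)

end IsSupergrad

theorem exists_isSupergrad_sum_mul_lt (hconc : ConcaveOn ℝ {x | 0 ≤ x} f)
    (husc : UpperSemicontinuousOn f {x | 0 ≤ x}) (hf : ∀ y, 0 ≤ y → 0 ≤ f y)
    {y : Fin N → ℝ} (hy : 0 ≤ y) {c : ℝ} (hc : f y < c) :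
    ∃ x, 0 ≤ x ∧ ∃ g, IsSupergrad f x g ∧ ∑ i, g i * y i < c := by
  have hcurve : Tendsto (fun δ : ℝ => y + δ • 1) (𝓝[>] 0) (𝓝[{x | 0 ≤ x}] y) := by
    refine tendsto_nhdsWithin_iff.2 ⟨?_, ?_⟩
    · have hcont : Continuous fun δ : ℝ => y + δ • (1 : Fin N → ℝ) := by fun_prop
      simpa using (hcont.tendsto 0).mono_left nhdsWithin_le_nhds
    · filter_upwards [self_mem_nhdsWithin] with δ hδ
      exact add_nonneg hy (smul_nonneg (le_of_lt hδ) zero_le_one)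
  obtain ⟨δ, hδc, hδ⟩ := ((hcurve.eventually (husc y hy c hc)).and self_mem_nhdsWithin).exists
  have hpos : ∀ i, 0 < (y + δ • 1) i := fun i => by
    simpa using add_pos_of_nonneg_of_pos (hy i) hδ
  obtain ⟨g, hg⟩ := exists_isSupergrad_of_pos hconc hf hpos
  have hx : 0 ≤ y + δ • 1 := fun i => (hpos i).le
  refine ⟨_, hx, g, hg, ?_⟩
  calc ∑ i, g i * y i ≤ ∑ i, g i * (y + δ • 1) i := by
        gcongr with i
        · exact hg.nonneg hf hx i
        · simpa using le_of_lt hδ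
    _ ≤ f (y + δ • 1) := hg.sum_mul_le (hf 0 le_rfl)
    _ < c := hδc

theorem sum_mul_smul_single (g : Fin N → ℝ) (k : Fin N) (t : ℝ) :
    ∑ i, g i * (t • Pi.single k 1 : Fin N → ℝ) i = g k * t := by
  simp [Pi.single_apply]

theorem IsSupergrad.mul_apply_inv_smul_single_le (hf : ∀ y, 0 ≤ y → 0 ≤ f y) (hx : 0 ≤ x)
    (hg : IsSupergrad f x g) (k : Fin N) {h : ℝ} (hh : 0 < h) :
    h * f (h⁻¹ • Pi.single k 1) ≤ h * f x + g k := by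
  have hle := hg.le_add_sum_mul hf hx (y := h⁻¹ • Pi.single k 1)
    (smul_nonneg (inv_nonneg.2 hh.le) (Pi.single_nonneg.2 zero_le_one))
  rw [sum_mul_smul_single] at hle
  calc h * f (h⁻¹ • Pi.single k 1) ≤ h * (f x + g k * h⁻¹) := by gcongr
    _ = h * f x + g k := by field_simp

theorem exists_isSupergrad_apply_lt (hconc : ConcaveOn ℝ {x | 0 ≤ x} f)
    (husc : UpperSemicontinuousOn f {x | 0 ≤ x}) (hf : ∀ y, 0 ≤ y → 0 ≤ f y) (k : Fin N)
    {h c : ℝ} (hh : 0 < h) (hc : h * f (h⁻¹ • Pi.single k 1) < c) :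
    ∃ x, 0 ≤ x ∧ ∃ g, IsSupergrad f x g ∧ g k < c := by
  obtain ⟨x, hx, g, hg, hgc⟩ := exists_isSupergrad_sum_mul_lt hconc husc hf
    (y := h⁻¹ • Pi.single k 1) (smul_nonneg (inv_nonneg.2 hh.le) (Pi.single_nonneg.2 zero_le_one))
    (show _ < c / h by rwa [lt_div_iff₀' hh])
  rw [sum_mul_smul_single, ← div_eq_mul_inv, div_lt_div_iff_of_pos_right hh] at hgc
  exact ⟨x, hx, g, hg, hgc⟩

end Orthant

/-- The componentwise infimum of the supergradients of a positive usc concave function is a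
nonnegative real, and it equals the limit of h·f(h⁻¹·e_k) as h → 0⁺. -/
theorem inf_supergradient_component_eq_limit {N : ℕ} (f : (Fin N → ℝ) → ℝ)
    (hconc : ConcaveOn ℝ {x : Fin N → ℝ | 0 ≤ x} f)
    (husc : UpperSemicontinuousOn f {x : Fin N → ℝ | 0 ≤ x})
    (hpos : ∀ x : Fin N → ℝ, 0 ≤ x → 0 < f x)
    (k : Fin N) (gstar : ℝ)
    (hgstar : gstar =
      sInf {t : ℝ | ∃ x : Fin N → ℝ, 0 ≤ x ∧
        ∃ g : Fin N → ℝ, IsSupergrad f x g ∧ g k = t}) :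
    0 ≤ gstar ∧
      Tendsto (fun h : ℝ => h * f (h⁻¹ • (Pi.single k 1 : Fin N → ℝ)))
        (𝓝[>] (0 : ℝ)) (𝓝 gstar) := by
  set S := {t : ℝ | ∃ x : Fin N → ℝ, 0 ≤ x ∧ ∃ g : Fin N → ℝ, IsSupergrad f x g ∧ g k = t}
  have hf : ∀ x : Fin N → ℝ, 0 ≤ x → 0 ≤ f x := fun x hx => (hpos x hx).le
  have hS_nonneg : ∀ r ∈ S, 0 ≤ r := by
    rintro _ ⟨x, hx, g, hg, rfl⟩
    exact hg.nonneg hf hx k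
  obtain ⟨g₁, hg₁⟩ := exists_isSupergrad_of_pos hconc hf (x := 1) fun _ => one_pos
  have hS_ne : S.Nonempty := ⟨_, 1, zero_le_one, g₁, hg₁, rfl⟩
  subst hgstar
  refine ⟨le_csInf hS_ne hS_nonneg, tendsto_order.2 ⟨fun a ha => ?_, fun a ha => ?_⟩⟩
  · filter_upwards [self_mem_nhdsWithin] with h (hh : 0 < h)
    refine ha.trans_le (le_of_forall_gt fun c hc => ?_)
    obtain ⟨x, hx, g, hg, hgc⟩ := exists_isSupergrad_apply_lt hconc husc hf k hh hc
    exact (csInf_le ⟨0, hS_nonneg⟩ ⟨x, hx, g, hg, rfl⟩).trans_lt hgc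
  · obtain ⟨_, ⟨x, hx, g, hg, rfl⟩, hga⟩ := exists_lt_of_csInf_lt hS_ne ha
    have hlim : Tendsto (fun h : ℝ => h * f x + g k) (𝓝[>] 0) (𝓝 (g k)) := by
      have hcont : Continuous fun h : ℝ => h * f x + g k := by fun_prop
      simpa using (hcont.tendsto 0).mono_left nhdsWithin_le_nhds
    filter_upwards [hlim.eventually (gt_mem_nhds hga), self_mem_nhdsWithin] with h hlt (hh : 0 < h)
    exact (hg.mul_apply_inv_smul_single_le hf hx k hh).trans_lt hlt
end

section
/- Let f : ℝ₊^N → ℝ₊₊ be an upper semicontinuous concave function, let x ∈ ℝ₊^N and k ∈ {1,…,N}, assume that ∂f(x + h·e_k) is nonempty for every h ≥ 0, and let h ↦ g(x + h·e_k) ∈ ∂f(x + h·e_k) be any selection of supergradients. Then lim_{h → ∞} g_k(x + h·e_k) = g_k* ≥ 0, where g_k* := inf{ u_k : u ∈ ⋃_{y ∈ ℝ₊^N} ∂f(y) } and g_k(x + h·e_k) denotes the k-th component of g(x + h·e_k). -/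
/-!
Since `f > 0` on the orthant, the inequality of a supergradient `u` at `y`, tested at
`y + c e_k` for large `c`, forces `u_k ≥ 0`. Testing the supergradient `g(h)` at `x` and a fixed
supergradient `u` (at some `y`) at `x + h e_k` gives `g_k(h) ≤ u_k + C/h` with `C` independent of
`h`; so every `u_k` bounds `limsup g_k(h)` from above, while `g_k(h) ≥ g_k*` holds trivially.
-/

open Matrix Filter Topology

noncomputable section

theorem tendsto_csInf_of_eventually_mem {α β : Type*} [ConditionallyCompleteLinearOrder β]
    [TopologicalSpace β] [OrderTopology β] {l : Filter α} [l.NeBot] {a : α → β} {S : Set β}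
    (hS : BddBelow S) (hmem : ∀ᶠ i in l, a i ∈ S)
    (hlt : ∀ t ∈ S, ∀ b, t < b → ∀ᶠ i in l, a i < b) :
    Tendsto a l (𝓝 (sInf S)) := by
  obtain ⟨i, hi⟩ := hmem.exists
  refine tendsto_order.2 ⟨fun b hb => hmem.mono fun j hj => hb.trans_le (csInf_le hS hj),
    fun b hb => ?_⟩
  obtain ⟨t, ht, htb⟩ := exists_lt_of_csInf_lt ⟨a i, hi⟩ hb
  exact hlt t ht b htb

theorem add_smul_single_nonneg {N : ℕ} {x : Fin N → ℝ} (hx : 0 ≤ x) (k : Fin N) {h : ℝ}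
    (hh : 0 ≤ h) : 0 ≤ x + h • (Pi.single k 1 : Fin N → ℝ) :=
  add_nonneg hx (smul_nonneg hh (Pi.single_nonneg.2 zero_le_one))

namespace IsSupergrad

variable {N : ℕ} {f : (Fin N → ℝ) → ℝ} {x y u : Fin N → ℝ}

theorem le_add_dotProduct (hu : IsSupergrad f y u) (hx : 0 ≤ x) :
    f x ≤ f y + u ⬝ᵥ (x - y) :=
  hu x hx

theorem apply_nonneg (hf : ∀ z : Fin N → ℝ, 0 ≤ z → 0 ≤ f z) (hy : 0 ≤ y)
    (hu : IsSupergrad f y u) (k : Fin N) : 0 ≤ u k := by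
  by_contra! hneg
  set c := (f y + 1) / -u k
  have hc : 0 ≤ c := div_nonneg (by linarith [hf y hy]) (neg_nonneg.2 hneg.le)
  have hz := add_smul_single_nonneg hy k hc
  have hle := hu.le_add_dotProduct hz
  have hdot : u ⬝ᵥ (y + c • Pi.single k 1 - y) = -(f y + 1) := by
    rw [add_sub_cancel_left, dotProduct_smul, dotProduct_single, smul_eq_mul, mul_one,
      div_mul_eq_mul_div, div_eq_iff (neg_ne_zero.2 hneg.ne)]
    ring
  linarith [hf _ hz]

theorem ray_apply_le {k : Fin N} {h : ℝ} {v : Fin N → ℝ} (hx : 0 ≤ x) (hh : 0 < h)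
    (hv : IsSupergrad f (x + h • Pi.single k 1) v) (hu : IsSupergrad f y u) :
    v k ≤ u k + (f y + u ⬝ᵥ (x - y) - f x) / h := by
  have hback := hv.le_add_dotProduct hx
  have hforward := hu.le_add_dotProduct (add_smul_single_nonneg hx k hh.le)
  rw [sub_add_cancel_left, dotProduct_neg, dotProduct_smul, dotProduct_single] at hback
  rw [add_sub_right_comm, dotProduct_add, dotProduct_smul, dotProduct_single] at hforward
  simp only [smul_eq_mul, mul_one] at hback hforward
  rw [← sub_le_iff_le_add', le_div_iff₀ hh]
  linarith

theorem eventually_ray_apply_lt {k : Fin N} {g : ℝ → Fin N → ℝ} (hx : 0 ≤ x)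
    (hg : ∀ h : ℝ, 0 ≤ h → IsSupergrad f (x + h • Pi.single k 1) (g h))
    (hu : IsSupergrad f y u) {b : ℝ} (hb : u k < b) :
    ∀ᶠ h in atTop, g h k < b := by
  have hlim : Tendsto (fun h => u k + (f y + u ⬝ᵥ (x - y) - f x) / h) atTop (𝓝 (u k)) := by
    simpa using tendsto_const_nhds.add (tendsto_const_nhds.div_atTop (tendsto_id (α := ℝ)))
  filter_upwards [hlim.eventually_lt_const hb, eventually_gt_atTop 0] with h hlt hh
  exact ((hg h hh.le).ray_apply_le hx hh hu).trans_lt hlt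

end IsSupergrad

theorem supergradient_selection_tendsto_inf_general {N : ℕ} (f : (Fin N → ℝ) → ℝ)
    (hpos : ∀ x : Fin N → ℝ, 0 ≤ x → 0 < f x)
    (x : Fin N → ℝ) (hx : 0 ≤ x) (k : Fin N)
    (g : ℝ → Fin N → ℝ)
    (hg : ∀ h : ℝ, 0 ≤ h →
      IsSupergrad f (x + h • (Pi.single k 1 : Fin N → ℝ)) (g h))
    (gstar : ℝ)
    (hgstar : gstar =
      sInf {t : ℝ | ∃ y : Fin N → ℝ, 0 ≤ y ∧
        ∃ u : Fin N → ℝ, IsSupergrad f y u ∧ u k = t}) :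
    0 ≤ gstar ∧ Tendsto (fun h : ℝ => g h k) atTop (𝓝 gstar) := by
  set S := {t : ℝ | ∃ y : Fin N → ℝ, 0 ≤ y ∧ ∃ u : Fin N → ℝ, IsSupergrad f y u ∧ u k = t}
  have hmem : ∀ h : ℝ, 0 ≤ h → g h k ∈ S := fun h hh =>
    ⟨_, add_smul_single_nonneg hx k hh, g h, hg h hh, rfl⟩
  have hnonneg : ∀ t ∈ S, 0 ≤ t := by
    rintro _ ⟨y, hy, u, hu, rfl⟩
    exact hu.apply_nonneg (fun z hz => (hpos z hz).le) hy k
  subst hgstar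
  refine ⟨le_csInf ⟨_, hmem 0 le_rfl⟩ hnonneg, ?_⟩
  refine tendsto_csInf_of_eventually_mem ⟨0, hnonneg⟩ ((eventually_ge_atTop 0).mono hmem) ?_
  rintro _ ⟨y, -, u, hu, rfl⟩ b hb
  exact hu.eventually_ray_apply_lt hx hg hb

/-- Any selection of supergradients along the direction e_k has its k-th component
converging, as h → ∞, to the infimum of the k-th components of all supergradients. -/
theorem supergradient_selection_tendsto_inf {N : ℕ} (f : (Fin N → ℝ) → ℝ)
    (hconc : ConcaveOn ℝ {x : Fin N → ℝ | 0 ≤ x} f)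
    (husc : UpperSemicontinuousOn f {x : Fin N → ℝ | 0 ≤ x})
    (hpos : ∀ x : Fin N → ℝ, 0 ≤ x → 0 < f x)
    (x : Fin N → ℝ) (hx : 0 ≤ x) (k : Fin N)
    (g : ℝ → Fin N → ℝ)
    (hg : ∀ h : ℝ, 0 ≤ h →
      IsSupergrad f (x + h • (Pi.single k 1 : Fin N → ℝ)) (g h))
    (gstar : ℝ)
    (hgstar : gstar =
      sInf {t : ℝ | ∃ y : Fin N → ℝ, 0 ≤ y ∧
        ∃ u : Fin N → ℝ, IsSupergrad f y u ∧ u k = t}) :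
    0 ≤ gstar ∧ Tendsto (fun h : ℝ => g h k) atTop (𝓝 gstar) :=
  supergradient_selection_tendsto_inf_general f hpos x hx k g hg gstar hgstar
end
end

section
/- Let T : ℝ₊^N → ℝ₊₊^N be a positive concave mapping and let M be its lower bounding matrix. Then for all x, y ∈ ℝ₊^N with x ≥ y componentwise, one has T(x) ≥ T(y) + M·(x − y) componentwise. -/
open Matrix Filter Topology

noncomputable section

/-- `M` is the lower bounding matrix of the positive concave mapping with components `f i`:
`M i k` is the infimum of the `k`-th components of all supergradients of `f i` at points of
the nonnegative orthant. -/
def IsLBM {N : ℕ} (f : Fin N → (Fin N → ℝ) → ℝ) (M : Matrix (Fin N) (Fin N) ℝ) : Prop :=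
  ∀ i k, M i k =
    sInf {t : ℝ | ∃ x : Fin N → ℝ, 0 ≤ x ∧ ∃ g : Fin N → ℝ, IsSupergrad (f i) x g ∧ g k = t}

/-- The spectral radius of a real matrix: the supremum of the moduli of its complex
eigenvalues. -/
def specRad {N : ℕ} (M : Matrix (Fin N) (Fin N) ℝ) : ENNReal :=
  spectralRadius ℂ (M.map (algebraMap ℝ ℂ))

/-!
At a point `z` of the open orthant, separating `(z, f z)` from the open strict hypograph of the
concave `f` by Hahn–Banach gives a supergradient `g`; the hyperplane is not vertical because the
hypograph contains `(z, f z - 1)`. Since `f > 0` on the orthant, `g ≥ 0` (otherwise the affine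
majorant vanishes somewhere on a coordinate ray), hence the infimum defining `M` is bounded below
and `M i ≤ g`. For `y ≤ x ≤ z` this gives
`f y + M (x - y) ≤ f y + g ⬝ᵥ (z - y) ≤ f z`; take `z = x + ε • 1` and let `ε → 0⁺`, using upper
semicontinuity of `f` at `x`.
-/

open Set

section Supergradient

variable {E : Type*} [TopologicalSpace E] [AddCommGroup E] [Module ℝ E]
  [IsTopologicalAddGroup E] [ContinuousSMul ℝ E] {s : Set E} {f : E → ℝ} {x : E}

theorem ConcaveOn.exists_supergradient_of_isOpen (hs : IsOpen s) (hf : ConcaveOn ℝ s f)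
    (hfc : ContinuousOn f s) (hx : x ∈ s) :
    ∃ ℓ : StrongDual ℝ E, ∀ z ∈ s, f z ≤ f x + ℓ (z - x) := by
  set A : Set (E × ℝ) := {p | p.1 ∈ s ∧ p.2 < f p.1}
  have hA_open : IsOpen A :=
    ((hfc.comp continuousOn_fst fun _ hp => hp).prodMk continuousOn_snd).isOpen_inter_preimage
      (hs.preimage continuous_fst) (isOpen_lt continuous_snd continuous_fst)
  obtain ⟨L, hL⟩ := geometric_hahn_banach_open_point hf.convex_strict_hypograph hA_open
    (fun h : (x, f x) ∈ A => lt_irrefl _ h.2)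
  set φ := L.comp (ContinuousLinearMap.inl ℝ E ℝ)
  set c := L (0, 1)
  have hL_apply (z : E) (t : ℝ) : L (z, t) = φ z + t * c := by
    rw [← smul_eq_mul, ← L.map_smul, ContinuousLinearMap.comp_apply, ContinuousLinearMap.inl_apply,
      ← map_add, Prod.smul_mk, smul_zero, smul_eq_mul, mul_one, Prod.mk_add_mk, add_zero, zero_add]
  have hc : 0 < c := by
    have := hL (x, f x - 1) ⟨hx, by simp⟩
    rw [hL_apply, hL_apply x (f x)] at this
    linarith
  refine ⟨-c⁻¹ • φ, fun z hz => le_of_forall_lt fun t ht => ?_⟩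
  have := hL (z, t) ⟨hz, ht⟩
  rw [hL_apply, hL_apply x (f x)] at this
  have hℓ : (-c⁻¹ • φ) (z - x) = (φ x - φ z) / c := by
    rw [FunLike.coe_smul, Pi.smul_apply, map_sub, smul_eq_mul]
    ring
  rw [hℓ, ← sub_lt_iff_lt_add', lt_div_iff₀ hc]
  linarith

theorem ConcaveOn.le_add_of_forall_mem_interior (hf : ConcaveOn ℝ s f) (hx : x ∈ interior s)
    {ℓ : E →ₗ[ℝ] ℝ} (hℓ : ∀ z ∈ interior s, f z ≤ f x + ℓ (z - x)) {y : E} (hy : y ∈ s) :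
    f y ≤ f x + ℓ (y - x) := by
  have hz := hf.1.combo_interior_self_mem_interior hx hy one_half_pos one_half_pos.le
    (add_halves 1)
  have hconc := hf.2 (interior_subset hx) hy one_half_pos.le one_half_pos.le (add_halves 1)
  have hsub : ((1 / 2 : ℝ) • x + (1 / 2 : ℝ) • y) - x = (1 / 2 : ℝ) • (y - x) := by module
  have := hℓ _ hz
  rw [hsub, map_smul, smul_eq_mul] at this
  simp only [smul_eq_mul] at hconc
  linarith

end Supergradient

theorem ConcaveOn.exists_supergradient_of_mem_interior {E : Type*} [NormedAddCommGroup E]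
    [NormedSpace ℝ E] [FiniteDimensional ℝ E] {s : Set E} {f : E → ℝ} {x : E}
    (hf : ConcaveOn ℝ s f) (hx : x ∈ interior s) :
    ∃ ℓ : StrongDual ℝ E, ∀ y ∈ s, f y ≤ f x + ℓ (y - x) := by
  obtain ⟨ℓ, hℓ⟩ := (hf.subset interior_subset hf.1.interior).exists_supergradient_of_isOpen
    isOpen_interior hf.continuousOn_interior hx
  exact ⟨ℓ, fun y hy => hf.le_add_of_forall_mem_interior hx (ℓ := ℓ.toLinearMap) hℓ hy⟩

theorem UpperSemicontinuousWithinAt.le_of_tendsto {α β δ : Type*} [TopologicalSpace α]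
    [LinearOrder δ] {f : α → δ} {s : Set α} {x : α} {l : Filter β} [l.NeBot] {γ : β → α}
    (hf : UpperSemicontinuousWithinAt f s x) (hγ : Tendsto γ l (𝓝[s] x)) {C : δ}
    (hC : ∀ᶠ b in l, C ≤ f (γ b)) : C ≤ f x := by
  by_contra! h
  obtain ⟨b, hlt, hle⟩ := ((hγ.eventually (hf C h)).and hC).exists
  exact (hlt.trans_le hle).false

theorem mem_interior_nonneg_of_forall_pos {ι : Type*} [Finite ι] {x : ι → ℝ} (hx : ∀ k, 0 < x k) :
    x ∈ interior {x : ι → ℝ | 0 ≤ x} := by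
  change x ∈ interior (Ici 0)
  rw [← pi_univ_Ici, interior_pi_set finite_univ]
  simpa using hx

theorem tendsto_add_smul_one_nhdsWithin_nonneg {ι : Type*} {x : ι → ℝ} (hx : 0 ≤ x) :
    Tendsto (fun ε : ℝ => x + ε • 1) (𝓝[>] 0) (𝓝[{x : ι → ℝ | 0 ≤ x}] x) := by
  refine tendsto_nhdsWithin_iff.2 ⟨?_, eventually_nhdsWithin_of_forall fun ε hε => ?_⟩
  · have : Continuous fun ε : ℝ => x + ε • (1 : ι → ℝ) := by fun_prop
    simpa using this.continuousWithinAt.tendsto (x := 0) (s := Ioi 0)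
  · exact add_nonneg hx (smul_nonneg (le_of_lt hε) zero_le_one)

section Orthant

variable {N : ℕ}

theorem isSupergrad_iff_dotProduct {f : (Fin N → ℝ) → ℝ} {x g : Fin N → ℝ} :
    IsSupergrad f x g ↔ ∀ y : Fin N → ℝ, 0 ≤ y → f y ≤ f x + g ⬝ᵥ (y - x) :=
  Iff.rfl

theorem exists_isSupergrad_of_forall_pos {f : (Fin N → ℝ) → ℝ} (hf : ConcaveOn ℝ {x | 0 ≤ x} f)
    {x : Fin N → ℝ} (hx : ∀ k, 0 < x k) : ∃ g, IsSupergrad f x g := by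
  obtain ⟨ℓ, hℓ⟩ := hf.exists_supergradient_of_mem_interior (mem_interior_nonneg_of_forall_pos hx)
  refine ⟨(dotProductEquiv ℝ (Fin N)).symm ℓ, isSupergrad_iff_dotProduct.2 fun y hy => ?_⟩
  have hdot := LinearMap.congr_fun ((dotProductEquiv ℝ (Fin N)).apply_symm_apply ℓ) (y - x)
  rw [dotProductEquiv_apply_apply] at hdot
  rw [hdot]
  exact hℓ y hy

theorem IsSupergrad.nonneg_s7 {f : (Fin N → ℝ) → ℝ} (hpos : ∀ y : Fin N → ℝ, 0 ≤ y → 0 < f y)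
    {x g : Fin N → ℝ} (hx : 0 ≤ x) (hg : IsSupergrad f x g) : 0 ≤ g := by
  intro k
  by_contra! hk
  change g k < 0 at hk
  set y := x + Pi.single k (f x / -g k)
  have hy : 0 ≤ y := add_nonneg hx (Pi.single_nonneg.2 (div_nonneg (hpos x hx).le (by linarith)))
  have hgy : g ⬝ᵥ (y - x) = -f x := by
    rw [add_sub_cancel_left, dotProduct_single, mul_div_assoc', div_neg,
      mul_div_cancel_left₀ _ hk.ne]
  linarith [isSupergrad_iff_dotProduct.1 hg y hy, hpos y hy]

theorem IsLBM.le_of_isSupergrad {f : Fin N → (Fin N → ℝ) → ℝ} {M : Matrix (Fin N) (Fin N) ℝ}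
    (hM : IsLBM f M) (hpos : ∀ i, ∀ y : Fin N → ℝ, 0 ≤ y → 0 < f i y) {i : Fin N}
    {x g : Fin N → ℝ} (hx : 0 ≤ x) (hg : IsSupergrad (f i) x g) : M i ≤ g := fun k => by
  rw [hM i k]
  refine csInf_le ⟨0, ?_⟩ ⟨x, hx, g, hg, rfl⟩
  rintro _ ⟨x', hx', g', hg', rfl⟩
  exact hg'.nonneg_s7 (hpos i) hx' k

theorem IsLBM.add_mulVec_sub_le {f : Fin N → (Fin N → ℝ) → ℝ} {M : Matrix (Fin N) (Fin N) ℝ}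
    (hM : IsLBM f M) (hconc : ∀ i, ConcaveOn ℝ {x : Fin N → ℝ | 0 ≤ x} (f i))
    (hpos : ∀ i, ∀ y : Fin N → ℝ, 0 ≤ y → 0 < f i y) {x y z : Fin N → ℝ} (hy : 0 ≤ y)
    (hyx : y ≤ x) (hxz : x ≤ z) (hz : ∀ k, 0 < z k) (i : Fin N) :
    f i y + (M *ᵥ (x - y)) i ≤ f i z := by
  obtain ⟨g, hg⟩ := exists_isSupergrad_of_forall_pos (hconc i) hz
  have hz₀ : 0 ≤ z := fun k => (hz k).le
  have hMg : M i ≤ g := hM.le_of_isSupergrad hpos hz₀ hg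
  have hg₀ : 0 ≤ g := hg.nonneg_s7 (hpos i) hz₀
  have hsum : (M *ᵥ (x - y)) i ≤ g ⬝ᵥ (z - y) := by
    change ∑ k, M i k * (x - y) k ≤ ∑ k, g k * (z - y) k
    exact Finset.sum_le_sum fun k _ => mul_le_mul (hMg k) (sub_le_sub_right (hxz k) _)
      (sub_nonneg.2 (hyx k)) (hg₀ k)
  have hneg : g ⬝ᵥ (y - z) = -(g ⬝ᵥ (z - y)) := by
    rw [← dotProduct_neg, neg_sub]
  linarith [isSupergrad_iff_dotProduct.1 hg y hy]

end Orthant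

/-- A positive concave mapping is bounded below by the affine mapping built from its
lower bounding matrix: x ≥ y implies T(x) ≥ T(y) + M(x − y). -/
theorem lower_bounding_matrix_affine_minorant {N : ℕ} (f : Fin N → (Fin N → ℝ) → ℝ)
    (hconc : ∀ i, ConcaveOn ℝ {x : Fin N → ℝ | 0 ≤ x} (f i))
    (husc : ∀ i, UpperSemicontinuousOn (f i) {x : Fin N → ℝ | 0 ≤ x})
    (hpos : ∀ i, ∀ x : Fin N → ℝ, 0 ≤ x → 0 < f i x)
    (M : Matrix (Fin N) (Fin N) ℝ) (hM : IsLBM f M) :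
    ∀ x y : Fin N → ℝ, 0 ≤ y → 0 ≤ x → y ≤ x →
      ∀ i, f i y + (M *ᵥ (x - y)) i ≤ f i x := by
  intro x y hy hx hyx i
  have hshift : ∀ ε : ℝ, 0 < ε → f i y + (M *ᵥ (x - y)) i ≤ f i (x + ε • 1) := fun ε hε =>
    hM.add_mulVec_sub_le hconc hpos hy hyx (le_add_of_nonneg_right (smul_nonneg hε.le zero_le_one))
      (fun k => by simpa using add_pos_of_nonneg_of_pos (hx k) hε) i
  exact UpperSemicontinuousWithinAt.le_of_tendsto (husc i x hx)
    (tendsto_add_smul_one_nhdsWithin_nonneg hx) (eventually_nhdsWithin_of_forall hshift)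
end
end
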